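/- arXiv:2004.12532 — 10 statements merged into one kernel-verified Lean document; each statement's English description precedes it below -/
import Mathlib

section
/- Let n ∈ ℕ and A : Fin n → Bool, and let A' be the result of applying one swap round of the MakeSuccessorHeavy procedure to A. Then for every index i with i < n - 1 - i, if A' (n-1-i) = true then A' i = true (i.e., after the swap round, the mirrored position n-1-i holds a successor only if position i also holds a successor). -/
/-- One swap round of the `MakeSuccessorHeavy` procedure: for each index `i`
with `i < n - 1 - i`, if position `i` holds a predecessor (`false`) and the
mirrored position `n - 1 - i` holds a successor (`true`), the two entries are
swapped; all other positions are left unchanged.  Here `Fin.rev i = n - 1 - i`. -/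
def swapRound {n : ℕ} (A : Fin n → Bool) : Fin n → Bool := fun j =>
  if (j : ℕ) < n - 1 - (j : ℕ) ∧ A j = false ∧ A j.rev = true then true
  else if n - 1 - (j : ℕ) < (j : ℕ) ∧ A j.rev = false ∧ A j = true then false
  else A j

theorem swapRound_mirror_successor (n : ℕ) (A A' : Fin n → Bool)
    (hA' : A' = swapRound A) :
    ∀ i : Fin n, (i : ℕ) < n - 1 - (i : ℕ) → A' i.rev = true → A' i = true := by
  subst hA'
  intro i hi hrev
  have hiv : (i.rev : ℕ) = n - 1 - (i : ℕ) := by rw [Fin.val_rev]; omega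
  have hle : (i : ℕ) ≤ n - 1 := Nat.le_of_lt (Nat.lt_of_lt_of_le hi (Nat.sub_le _ _))
  have hrr : n - 1 - ((i.rev : ℕ)) = (i : ℕ) := by
    rw [hiv]; omega
  simp only [swapRound, hiv, Fin.rev_rev, hrr] at hrev ⊢
  cases hA : A i with
  | true =>
    simp [hA, Nat.lt_asymm hi, hi]
  | false =>
    cases hB : A i.rev with
    | true => simp [hA, hB, hi]
    | false => simp [hA, hB, Nat.lt_asymm hi] at hrev
end

section
/- Let n ∈ ℕ and A : Fin n → Bool with 2 · |{i : A i = true}| ≥ n (at least half the elements are successors), and let A' be the result of applying one swap round of the MakeSuccessorHeavy procedure to A. Then for every t with ⌈n/2⌉ ≤ t ≤ n, the t-prefix of A' is successor-heavy, i.e. 4 · |{i : i < t ∧ A' i = true}| ≥ t. -/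
open Finset

namespace Fin

variable {n : ℕ}

theorem card_filter_val_lt_and_add_card_filter_val_lt_and_not (p : Fin n → Prop)
    [DecidablePred p] {t : ℕ} (ht : t ≤ n) :
    #{i : Fin n | (i : ℕ) < t ∧ p i} + #{i : Fin n | (i : ℕ) < t ∧ ¬ p i} = t := by
  rw [← filter_filter, ← filter_filter, card_filter_add_card_filter_not, card_filter_val_lt,
    min_eq_right ht]

theorem card_filter_val_lt_and_le_add (p : Fin n → Prop) [DecidablePred p] (s t : ℕ) :
    #{i : Fin n | (i : ℕ) < t ∧ p i} ≤ #{i : Fin n | (i : ℕ) < s ∧ p i} + (t - s) := by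
  have hmiddle : #{i : Fin n | s ≤ (i : ℕ) ∧ (i : ℕ) < t} ≤ t - s := by
    rw [← Nat.card_Ico]
    refine card_le_card_of_injOn Fin.val (fun i hi => ?_) Fin.val_injective.injOn
    simpa using hi
  calc #{i : Fin n | (i : ℕ) < t ∧ p i}
      ≤ #(({i : Fin n | (i : ℕ) < s ∧ p i} : Finset (Fin n)) ∪
          ({i : Fin n | s ≤ (i : ℕ) ∧ (i : ℕ) < t} : Finset (Fin n))) := by
        refine card_le_card fun i hi => ?_
        simp only [mem_union, mem_filter, mem_univ, true_and] at hi ⊢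
        rcases lt_or_ge (i : ℕ) s with hs | hs
        · exact .inl ⟨hs, hi.2⟩
        · exact .inr ⟨hs, hi.1⟩
    _ ≤ _ := (card_union_le _ _).trans (by omega)

/-- Only the middle position of an odd-length array is its own mirror, so folding a subset of the
first half onto the second half loses at most `n % 2` elements. -/
theorem two_mul_card_le_card_union_image_rev {P : Finset (Fin n)}
    (hP : ∀ i ∈ P, (i : ℕ) < (n + 1) / 2) :
    2 * #P ≤ #(P ∪ P.image Fin.rev) + n % 2 := by
  have hoverlap : #(P ∩ P.image Fin.rev) ≤ n % 2 := by
    have hIco : #(Ico (n / 2) ((n + 1) / 2)) = n % 2 := by rw [Nat.card_Ico]; omega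
    rw [← hIco]
    refine card_le_card_of_injOn Fin.val (fun i hi => ?_) Fin.val_injective.injOn
    obtain ⟨hi, j, hj, rfl⟩ := mem_inter.mp hi |>.imp_right mem_image.mp
    have := hP j hj
    have := hP _ hi
    simp only [coe_Ico, Set.mem_Ico, val_rev] at this ⊢
    omega
  have := card_union_add_card_inter P (P.image Fin.rev)
  rw [card_image_of_injective _ rev_injective] at this
  omega

end Fin

open Fin

variable {n : ℕ}

/-- The range includes the middle position of odd `n`, which is its own mirror and is left
unchanged. -/
theorem swapRound_eq_false_of_lt {A : Fin n → Bool} {i : Fin n} (hi : (i : ℕ) < (n + 1) / 2)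
    (h : swapRound A i = false) : A i = false ∧ A i.rev = false := by
  unfold swapRound at h
  split_ifs at h with hlow hhigh
  · omega
  · refine ⟨h, ?_⟩
    by_cases hmid : 2 * (i : ℕ) + 1 = n
    · rwa [show i.rev = i from Fin.ext (by rw [val_rev]; omega)]
    · simpa [h, show (i : ℕ) < n - 1 - i by omega] using hlow

theorem two_mul_card_swapRound_eq_false_le (A : Fin n → Bool) :
    2 * #{i : Fin n | (i : ℕ) < (n + 1) / 2 ∧ swapRound A i = false}
      ≤ #{i : Fin n | A i = false} + n % 2 := by
  set P := ({i : Fin n | (i : ℕ) < (n + 1) / 2 ∧ swapRound A i = false} : Finset (Fin n))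
  have hfold := two_mul_card_le_card_union_image_rev (P := P) fun i hi => (mem_filter.mp hi).2.1
  have hsub : P ∪ P.image Fin.rev ⊆ ({i : Fin n | A i = false} : Finset (Fin n)) := by
    intro i hi
    simp only [P, mem_union, mem_image, mem_filter, mem_univ, true_and] at hi ⊢
    rcases hi with hi | ⟨j, hj, rfl⟩
    · exact (swapRound_eq_false_of_lt hi.1 hi.2).1
    · exact (swapRound_eq_false_of_lt hj.1 hj.2).2
  have := card_le_card hsub
  omega

theorem swapRound_prefixes_successor_heavy (n : ℕ) (A A' : Fin n → Bool)
    (hA : 2 * (Finset.univ.filter fun i : Fin n => A i = true).card ≥ n)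
    (hA' : A' = swapRound A) :
    ∀ t : ℕ, (n + 1) / 2 ≤ t → t ≤ n →
      4 * (Finset.univ.filter fun i : Fin n => (i : ℕ) < t ∧ A' i = true).card ≥ t := by
  intro t hht htn
  subst hA'
  have htotal := card_filter_add_card_filter_not (s := univ) fun i : Fin n => A i = true
  have hprefix := card_filter_val_lt_and_add_card_filter_val_lt_and_not
    (fun i : Fin n => swapRound A i = true) htn
  simp only [Bool.not_eq_true, card_univ, Fintype.card_fin] at htotal hprefix
  have hextend := card_filter_val_lt_and_le_add (fun i : Fin n => swapRound A i = false)
    ((n + 1) / 2) t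
  have hfold := two_mul_card_swapRound_eq_false_le A
  omega
end

section
/- Let n ∈ ℕ and A : Fin n → Bool with 2 · |{i : A i = true}| ≥ n (at least half the elements are successors), and let A' be the result of applying one swap round of the MakeSuccessorHeavy procedure to A. Then the first ⌈n/2⌉ positions of A' contain at least ⌈n/4⌉ successors: |{i : i < ⌈n/2⌉ ∧ A' i = true}| ≥ ⌈n/4⌉. In particular, among the first ⌈n/2⌉ positions of A' there are at least as many successors as predecessors. -/
/-! After one swap round, a position `j` of the first half holds a successor exactly when
`j` or its mirror `rev j` held one before. Every successor of `A` is at such a `j` or at its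
mirror, so the first `⌈n/2⌉` positions of `swapRound A` carry at least half of the successors
of `A`, hence at least `⌈n/4⌉` of them. -/

open Finset

lemma swapRound_apply_of_le_rev {n : ℕ} (A : Fin n → Bool) {j : Fin n} (hj : j ≤ j.rev) :
    swapRound A j = (A j || A j.rev) := by
  have hj' : (j : ℕ) ≤ n - 1 - j := by rw [Fin.le_def, Fin.val_rev] at hj; omega
  rcases eq_or_lt_of_le hj' with hmid | hlt
  · have hfix : j.rev = j := Fin.ext (by rw [Fin.val_rev]; omega)
    simp [swapRound, hfix]
  · unfold swapRound
    cases A j <;> cases A j.rev <;> simp [hlt, Nat.not_lt_of_gt hlt]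

lemma le_rev_of_lt_half {n : ℕ} {j : Fin n} (hj : (j : ℕ) < (n + 1) / 2) : j ≤ j.rev := by
  rw [Fin.le_def, Fin.val_rev]; omega

lemma rev_lt_half_of_half_le {n : ℕ} {i : Fin n} (hi : (n + 1) / 2 ≤ (i : ℕ)) :
    (i.rev : ℕ) < (n + 1) / 2 := by
  rw [Fin.val_rev]; omega

lemma card_true_le_two_mul_card_swapRound_true_first_half {n : ℕ} (A : Fin n → Bool) :
    #{i | A i = true} ≤ 2 * #{i : Fin n | (i : ℕ) < (n + 1) / 2 ∧ swapRound A i = true} := by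
  set T := ({i : Fin n | (i : ℕ) < (n + 1) / 2 ∧ swapRound A i = true} : Finset (Fin n))
  have hcover : ({i | A i = true} : Finset (Fin n)) ⊆ T ∪ T.map Fin.revPerm.toEmbedding := by
    intro i hi
    simp only [mem_filter_univ] at hi
    by_cases hlow : (i : ℕ) < (n + 1) / 2
    · refine mem_union_left _ ((mem_filter_univ _).2 ⟨hlow, ?_⟩)
      rw [swapRound_apply_of_le_rev A (le_rev_of_lt_half hlow), hi, Bool.true_or]
    · have hrev := rev_lt_half_of_half_le (Nat.le_of_not_lt hlow)
      refine mem_union_right _ (mem_map.2 ⟨i.rev, (mem_filter_univ _).2 ⟨hrev, ?_⟩, by simp⟩)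
      rw [swapRound_apply_of_le_rev A (le_rev_of_lt_half hrev), Fin.rev_rev, hi, Bool.or_true]
  calc #{i | A i = true} ≤ #(T ∪ T.map Fin.revPerm.toEmbedding) := card_le_card hcover
    _ ≤ #T + #(T.map Fin.revPerm.toEmbedding) := card_union_le _ _
    _ = 2 * #T := by rw [card_map, two_mul]

lemma card_lt_true_add_card_lt_false {n : ℕ} (B : Fin n → Bool) {k : ℕ} (hk : k ≤ n) :
    #{i : Fin n | (i : ℕ) < k ∧ B i = true} + #{i : Fin n | (i : ℕ) < k ∧ B i = false} = k := by
  simp_rw [← filter_filter, ← Bool.not_eq_true]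
  rw [card_filter_add_card_filter_not, Fin.card_filter_val_lt, min_eq_right hk]

theorem swapRound_first_half_successors (n : ℕ) (A A' : Fin n → Bool)
    (hA : 2 * (Finset.univ.filter fun i : Fin n => A i = true).card ≥ n)
    (hA' : A' = swapRound A) :
    (Finset.univ.filter fun i : Fin n => (i : ℕ) < (n + 1) / 2 ∧ A' i = true).card ≥
        (n + 3) / 4 ∧
      (Finset.univ.filter fun i : Fin n => (i : ℕ) < (n + 1) / 2 ∧ A' i = false).card ≤
        (Finset.univ.filter fun i : Fin n => (i : ℕ) < (n + 1) / 2 ∧ A' i = true).card := by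
  subst hA'
  have hmass := card_true_le_two_mul_card_swapRound_true_first_half A
  have hsplit := card_lt_true_add_card_lt_false (swapRound A) (k := (n + 1) / 2) (by omega)
  constructor <;> omega
end

section
/- For every n ∈ ℕ and every A : Fin n → Bool with 2 · |{i : A i = true}| ≥ n (at least half the elements are successors), there exists a permutation σ of Fin n such that every prefix of the rearranged array A ∘ σ is successor-heavy: for every t with 1 ≤ t ≤ n, 4 · |{i : i < t ∧ A (σ i) = true}| ≥ t. -/
/-!
Move all successors to the front. A prefix of length `t` then holds `min t s` successors, where
`s ≥ n / 2` is the number of successors, and `4 * min t s ≥ t` because `t ≤ n ≤ 2 * s`.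
-/

open Finset

theorem Equiv.Perm.exists_apply_iff_of_card_filter_eq {α : Type*} [Fintype α]
    {p q : α → Prop} [DecidablePred p] [DecidablePred q] (h : #{x | p x} = #{x | q x}) :
    ∃ σ : Equiv.Perm α, ∀ x, q (σ x) ↔ p x := by
  obtain ⟨σ, hσ⟩ := Equiv.Perm.exists_map_finset_eq _ _ h
  refine ⟨σ, fun x => ?_⟩
  rw [← mem_filter_univ (p := q), ← hσ]
  simp

theorem exists_perm_all_prefixes_successor_heavy (n : ℕ) (A : Fin n → Bool)
    (hA : 2 * (Finset.univ.filter fun i : Fin n => A i = true).card ≥ n) :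
    ∃ σ : Equiv.Perm (Fin n),
      ∀ t : ℕ, 1 ≤ t → t ≤ n →
        4 * (Finset.univ.filter fun i : Fin n => (i : ℕ) < t ∧ A (σ i) = true).card ≥ t := by
  set s := #{i | A i = true}
  have hsn : s ≤ n := (card_filter_le _ _).trans (card_fin n).le
  obtain ⟨σ, hσ⟩ := Equiv.Perm.exists_apply_iff_of_card_filter_eq
    (p := fun i : Fin n => (i : ℕ) < s) (q := fun i => A i = true)
    (by rw [Fin.card_filter_val_lt]; omega)
  refine ⟨σ, fun t _ htn => ?_⟩
  have hprefix :
      #{i : Fin n | (i : ℕ) < t ∧ A (σ i) = true} = #{i : Fin n | (i : ℕ) < min t s} := by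
    congr 1; ext i; simp only [mem_filter, mem_univ, true_and, hσ]; omega
  rw [hprefix, Fin.card_filter_val_lt]
  omega
end

section
/- Let n ∈ ℕ, A : Fin n → Bool, and k ≤ t ≤ n such that the t-prefix of A is partitioned with the predecessors first: for every i < t, A i = false if and only if i < k. Let m = |{i : t ≤ i < n ∧ A i = false}| be the number of predecessors in the suffix, and assume m ≤ t - k (the prefix contains at least m successors). Let p_1 < p_2 < … < p_m be the increasing enumeration of the indices i with t ≤ i < n and A i = false. Then the positions k, k+1, …, k+m-1 all lie in the prefix (k + m ≤ t) and all hold successors, the 2m positions {k, …, k+m-1} ∪ {p_1, …, p_m} are pairwise distinct, and the permutation σ of Fin n obtained as the product of the m disjoint transpositions swapping position k+j-1 with position p_j (for j = 1, …, m) yields a fully partitioned array: the array B = A ∘ σ satisfies B i = false if and only if i < k + m. -/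
/-!
The positions `k, …, k + m - 1` hold successors of the prefix and lie before every `p j ≥ t`, so
the `2m` swapped positions are distinct and the transpositions are pairwise disjoint. Their product
therefore exchanges `k + j` with `p j` and fixes every other position: the suffix predecessors land
right after the `k` prefix predecessors, and every position from `k + m` on then holds a successor.
-/

open Equiv Function

namespace Equiv.Perm

variable {α : Type*} [DecidableEq α] {m : ℕ} (a b : Fin m → α)

theorem prod_ofFn_swap_apply_of_notMem {x : α} (ha : x ∉ Set.range a) (hb : x ∉ Set.range b) :
    (List.ofFn fun j => swap (a j) (b j)).prod x = x := by
  refine MulAction.mem_stabilizer_iff.mp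
    (list_prod_mem (S := MulAction.stabilizer (Perm α) x) fun g hg => ?_)
  obtain ⟨j, rfl⟩ := List.mem_ofFn.mp hg
  exact swap_apply_of_ne_of_ne (fun h => ha ⟨j, h.symm⟩) fun h => hb ⟨j, h.symm⟩

variable {a b}

theorem pairwise_disjoint_ofFn_swap (h : Injective (Sum.elim a b)) :
    (List.ofFn fun j => swap (a j) (b j)).Pairwise Disjoint := by
  refine List.pairwise_ofFn.mpr fun i j hij => disjoint_swap_swap ?_
  have hnodup : [Sum.inl i, Sum.inr i, Sum.inl j, Sum.inr j].Nodup := by simp [hij.ne]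
  simpa using hnodup.map h

variable [Fintype α]

theorem prod_ofFn_swap_apply_left (h : Injective (Sum.elim a b)) (j : Fin m) :
    (List.ofFn fun j => swap (a j) (b j)).prod (a j) = b j := by
  have hne : a j ≠ b j := h.ne (Sum.inl_ne_inr (a := j) (b := j))
  rw [← eq_on_support_mem_disjoint (List.mem_ofFn.mpr ⟨j, rfl⟩) (pairwise_disjoint_ofFn_swap h),
    swap_apply_left]
  simp [support_swap hne]

theorem prod_ofFn_swap_apply_right (h : Injective (Sum.elim a b)) (j : Fin m) :
    (List.ofFn fun j => swap (a j) (b j)).prod (b j) = a j := by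
  have hne : a j ≠ b j := h.ne (Sum.inl_ne_inr (a := j) (b := j))
  rw [← eq_on_support_mem_disjoint (List.mem_ofFn.mpr ⟨j, rfl⟩) (pairwise_disjoint_ofFn_swap h),
    swap_apply_right]
  simp [support_swap hne]

end Equiv.Perm

theorem reorder_swaps_complete_partition (n k t : ℕ) (A : Fin n → Bool)
    (hkt : k ≤ t) (htn : t ≤ n)
    (hpart : ∀ i : Fin n, (i : ℕ) < t → (A i = false ↔ (i : ℕ) < k))
    (m : ℕ)
    (hmtk : m ≤ t - k)
    (p : Fin m → Fin n) (hpmono : StrictMono p)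
    (hpmem : ∀ j : Fin m, t ≤ (p j : ℕ) ∧ A (p j) = false)
    (hponto : ∀ i : Fin n, t ≤ (i : ℕ) → A i = false → ∃ j : Fin m, p j = i) :
    ∃ hkm : k + m ≤ t,
      (∀ j : Fin m, A ⟨k + (j : ℕ), by have := j.isLt; omega⟩ = true) ∧
      (∀ j l : Fin m, k + (j : ℕ) ≠ (p l : ℕ)) ∧
      (∀ i : Fin n,
        A ((List.ofFn fun j : Fin m =>
              Equiv.swap (⟨k + (j : ℕ), by have := j.isLt; omega⟩ : Fin n) (p j)).prod i)
            = false ↔ (i : ℕ) < k + m) := by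
  have hkm : k + m ≤ t := by omega
  set a : Fin m → Fin n := fun j => ⟨k + j, by omega⟩
  have ha_true (j : Fin m) : A (a j) = true := by
    simpa [a] using (hpart (a j) (by simp [a]; omega)).not
  have hsep (j l : Fin m) : k + (j : ℕ) ≠ p l := by
    have := (hpmem l).1
    omega
  have ha_inj : Injective a := fun j l h => Fin.ext (by simpa [a] using congrArg Fin.val h)
  have hinj : Injective (Sum.elim a p) :=
    ha_inj.sumElim hpmono.injective fun j l h => hsep j l (congrArg Fin.val h)
  refine ⟨hkm, ha_true, hsep, fun i => ?_⟩
  show A ((List.ofFn fun j => swap (a j) (p j)).prod i) = false ↔ _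
  by_cases hia : i ∈ Set.range a
  · obtain ⟨j, rfl⟩ := hia
    simp [Perm.prod_ofFn_swap_apply_left hinj, (hpmem j).2, a]
  by_cases hip : i ∈ Set.range p
  · obtain ⟨j, rfl⟩ := hip
    simp only [Perm.prod_ofFn_swap_apply_right hinj, ha_true, Bool.true_eq_false, false_iff]
    have := (hpmem j).1
    omega
  rw [Perm.prod_ofFn_swap_apply_of_notMem a p hia hip]
  have hi_outside : (i : ℕ) < k ∨ k + m ≤ i := by
    by_contra! h
    exact hia ⟨⟨i - k, by omega⟩, Fin.ext (by simp [a]; omega)⟩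
  rcases lt_or_ge (i : ℕ) t with hit | hit
  · rw [hpart i hit]
    omega
  · have hAi : A i ≠ false := fun hfalse => hip (hponto i hit hfalse)
    rw [iff_false_left hAi]
    omega
end

section
/- Let n ∈ ℕ and A : Fin n → Bool, let t = |{i : A i = false}| be the total number of predecessors, and for i ∈ Fin n let S i = |{j : j ≤ i ∧ A j = false}| be the number of predecessors among the first i+1 positions. Define π : Fin n → Fin n by π i = S i - 1 if A i = false, and π i = t + (i + 1 - S i) - 1 if A i = true. Then: (1) π is a bijection of Fin n; (2) π maps the set of predecessor positions {i : A i = false} onto {0, 1, …, t-1} and the set of successor positions {i : A i = true} onto {t, t+1, …, n-1}; and (3) π is strictly increasing on the predecessor positions and strictly increasing on the successor positions (so the reordering is stable). -/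
theorem standard_reordering_map_bijective_stable (n : ℕ) (A : Fin n → Bool)
    (t : ℕ) (ht : t = (Finset.univ.filter fun i : Fin n => A i = false).card)
    (S : Fin n → ℕ)
    (hS : ∀ i : Fin n, S i = (Finset.univ.filter fun j : Fin n => j ≤ i ∧ A j = false).card)
    (π : Fin n → Fin n)
    (hπpred : ∀ i : Fin n, A i = false → (π i : ℕ) = S i - 1)
    (hπsucc : ∀ i : Fin n, A i = true → (π i : ℕ) = t + ((i : ℕ) + 1 - S i) - 1) :
    Function.Bijective π ∧
      ((Finset.univ.filter fun i : Fin n => A i = false).image π =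
        Finset.univ.filter fun j : Fin n => (j : ℕ) < t) ∧
      ((Finset.univ.filter fun i : Fin n => A i = true).image π =
        Finset.univ.filter fun j : Fin n => t ≤ (j : ℕ)) ∧
      (∀ i j : Fin n, A i = false → A j = false → i < j → π i < π j) ∧
      (∀ i j : Fin n, A i = true → A j = true → i < j → π i < π j) := by
  classical
  -- counting lemma for Fin
  have hcount : ∀ m : ℕ, m ≤ n → (Finset.univ.filter fun j : Fin n => (j:ℕ) < m).card = m := by
    intro m hm
    have : (Finset.univ.filter fun j : Fin n => (j:ℕ) < m) =
        Finset.map (Fin.castLEEmb hm) Finset.univ := by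
      ext j
      simp only [Finset.mem_filter, Finset.mem_univ, true_and, Finset.mem_map,
        Fin.castLEEmb_apply]
      constructor
      · intro hj; exact ⟨⟨j, hj⟩, rfl⟩
      · rintro ⟨k, rfl⟩; exact k.isLt
    rw [this]; simp
  have htn : t ≤ n := by
    rw [ht]
    calc (Finset.univ.filter fun i : Fin n => A i = false).card
        ≤ (Finset.univ : Finset (Fin n)).card := Finset.card_le_card (Finset.filter_subset _ _)
      _ = n := by simp
  -- T' i = number of successors among first i+1
  set T : Fin n → ℕ := fun i => (Finset.univ.filter fun j : Fin n => j ≤ i ∧ A j = true).card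
    with hT
  have hpart : ∀ i : Fin n, S i + T i = (i:ℕ) + 1 := by
    intro i
    have h1 : (Finset.univ.filter fun j : Fin n => j ≤ i).card = (i:ℕ) + 1 := by
      have : (Finset.univ.filter fun j : Fin n => j ≤ i) =
          (Finset.univ.filter fun j : Fin n => (j:ℕ) < (i:ℕ) + 1) := by
        ext j
        simp only [Finset.mem_filter, Finset.mem_univ, true_and, Fin.le_def, Nat.lt_succ_iff]
      rw [this]; exact hcount _ i.isLt
    have h2 := Finset.card_filter_add_card_filter_not
      (s := Finset.univ.filter fun j : Fin n => j ≤ i) (p := fun j => A j = false)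
    rw [Finset.filter_filter, Finset.filter_filter] at h2
    rw [hS i, hT]
    simp only at h2 ⊢
    rw [h1] at h2
    have : (Finset.univ.filter fun j : Fin n => j ≤ i ∧ ¬ A j = false) =
        (Finset.univ.filter fun j : Fin n => j ≤ i ∧ A j = true) := by
      ext j; simp
    rw [this] at h2
    exact h2
  have hSle : ∀ i : Fin n, S i ≤ t := by
    intro i; rw [hS i, ht]
    apply Finset.card_le_card
    intro j hj
    simp only [Finset.mem_filter] at hj ⊢
    exact ⟨hj.1, hj.2.2⟩
  have htrue : (Finset.univ.filter fun i : Fin n => A i = true).card = n - t := by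
    have h2 := Finset.card_filter_add_card_filter_not
      (s := (Finset.univ : Finset (Fin n))) (p := fun j => A j = false)
    have : (Finset.univ.filter fun j : Fin n => ¬ A j = false) =
        (Finset.univ.filter fun j : Fin n => A j = true) := by ext j; simp
    rw [this] at h2
    simp only [Finset.card_univ, Fintype.card_fin] at h2
    omega
  have hTle : ∀ i : Fin n, T i ≤ n - t := by
    intro i; rw [hT, ← htrue]
    apply Finset.card_le_card
    intro j hj
    simp only [Finset.mem_filter] at hj ⊢
    exact ⟨hj.1, hj.2.2⟩
  have hSpos : ∀ i : Fin n, A i = false → 1 ≤ S i := by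
    intro i hi; rw [hS i]
    exact Finset.card_pos.mpr ⟨i, by simp [hi]⟩
  have hTpos : ∀ i : Fin n, A i = true → 1 ≤ T i := by
    intro i hi; rw [hT]
    exact Finset.card_pos.mpr ⟨i, by simp [hi]⟩
  -- strict monotonicity
  have hmonoS : ∀ i j : Fin n, A j = false → i < j → S i < S j := by
    intro i j hj hij
    rw [hS i, hS j]
    apply Finset.card_lt_card
    constructor
    · intro k hk; simp only [Finset.mem_filter] at hk ⊢
      exact ⟨hk.1, le_trans hk.2.1 (le_of_lt hij), hk.2.2⟩
    · intro h
      have := h (by simp [hj] : j ∈ _)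
      simp only [Finset.mem_filter] at this
      exact absurd this.2.1 (not_le.mpr hij)
  have hmonoT : ∀ i j : Fin n, A j = true → i < j → T i < T j := by
    intro i j hj hij
    rw [hT]
    apply Finset.card_lt_card
    constructor
    · intro k hk; simp only [Finset.mem_filter] at hk ⊢
      exact ⟨hk.1, le_trans hk.2.1 (le_of_lt hij), hk.2.2⟩
    · intro h
      have := h (by simp [hj] : j ∈ _)
      simp only [Finset.mem_filter] at this
      exact absurd this.2.1 (not_le.mpr hij)
  -- π values
  have hπF : ∀ i : Fin n, A i = false → (π i : ℕ) < t := by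
    intro i hi
    rw [hπpred i hi]
    have := hSpos i hi; have := hSle i; omega
  have hπT' : ∀ i : Fin n, A i = true → (π i : ℕ) = t + T i - 1 := by
    intro i hi
    rw [hπsucc i hi]
    have := hpart i; omega
  have hπT : ∀ i : Fin n, A i = true → t ≤ (π i : ℕ) := by
    intro i hi
    rw [hπT' i hi]
    have := hTpos i hi; omega
  -- stability
  have hstabF : ∀ i j : Fin n, A i = false → A j = false → i < j → π i < π j := by
    intro i j hi hj hij
    rw [Fin.lt_def, hπpred i hi, hπpred j hj]
    have := hmonoS i j hj hij; have := hSpos i hi; omega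
  have hstabT : ∀ i j : Fin n, A i = true → A j = true → i < j → π i < π j := by
    intro i j hi hj hij
    rw [Fin.lt_def, hπT' i hi, hπT' j hj]
    have := hmonoT i j hj hij; have := hTpos i hi; omega
  -- injectivity
  have key : ∀ i j : Fin n, i < j → π i ≠ π j := by
    intro i j hij
    rcases Bool.eq_false_or_eq_true (A i) with hi | hi <;>
      rcases Bool.eq_false_or_eq_true (A j) with hj | hj
    · exact ne_of_lt (hstabT i j hi hj hij)
    · intro h
      have h1 := hπF j hj
      have h2 := hπT i hi
      rw [h] at h2; omega
    · intro h
      have h1 := hπF i hi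
      have h2 := hπT j hj
      rw [h] at h1; omega
    · exact ne_of_lt (hstabF i j hi hj hij)
  have hinj : Function.Injective π := by
    intro i j h
    by_contra hne
    rcases lt_or_gt_of_ne hne with hlt | hlt
    · exact key i j hlt h
    · exact key j i hlt h.symm
  have hbij : Function.Bijective π := Finite.injective_iff_bijective.mp hinj
  -- image of predecessors
  have himF : (Finset.univ.filter fun i : Fin n => A i = false).image π =
      Finset.univ.filter fun j : Fin n => (j : ℕ) < t := by
    apply Finset.eq_of_subset_of_card_le
    · intro x hx
      simp only [Finset.mem_image, Finset.mem_filter, Finset.mem_univ, true_and] at hx ⊢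
      rcases hx with ⟨i, hi, rfl⟩
      exact hπF i hi
    · rw [hcount t htn, Finset.card_image_of_injective _ hinj, ← ht]
  have himT : (Finset.univ.filter fun i : Fin n => A i = true).image π =
      Finset.univ.filter fun j : Fin n => t ≤ (j : ℕ) := by
    apply Finset.eq_of_subset_of_card_le
    · intro x hx
      simp only [Finset.mem_image, Finset.mem_filter, Finset.mem_univ, true_and] at hx ⊢
      rcases hx with ⟨i, hi, rfl⟩
      exact hπT i hi
    · have hge : (Finset.univ.filter fun j : Fin n => t ≤ (j : ℕ)).card = n - t := by
        have h2 := Finset.card_filter_add_card_filter_not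
          (s := (Finset.univ : Finset (Fin n))) (p := fun j : Fin n => (j:ℕ) < t)
        have he : (Finset.univ.filter fun j : Fin n => ¬ (j:ℕ) < t) =
            (Finset.univ.filter fun j : Fin n => t ≤ (j:ℕ)) := by ext j; simp
        rw [he, hcount t htn] at h2
        simp only [Finset.card_univ, Fintype.card_fin] at h2
        omega
      rw [hge, Finset.card_image_of_injective _ hinj, htrue]
  exact ⟨hbij, himF, himT, hstabF, hstabT⟩
end

section
/- Let n ∈ ℕ be even and D : {1, …, n} → ℕ. Define D' : {1, …, n/2} → ℕ by D'[m] = D[2m-1] + D[2m], and let S' : {1, …, n/2} → ℕ be its prefix sums, S'[m] = ∑_{l=1}^m D'[l] (with the convention S'[0] = 0). Define S : {1, …, n} → ℕ by S[i] = S'[(i-1)/2] + D[i] when i is odd and S[i] = S'[i/2] when i is even. Then S is the prefix-sum array of D: for every i ∈ {1, …, n}, S[i] = ∑_{j=1}^i D[j]. -/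
theorem prefix_sum_recursion_correct (n : ℕ) (hn : Even n)
    (D D' S' S : ℕ → ℕ)
    (hD' : ∀ m : ℕ, 1 ≤ m → m ≤ n / 2 → D' m = D (2 * m - 1) + D (2 * m))
    (hS' : ∀ m : ℕ, m ≤ n / 2 → S' m = ∑ l ∈ Finset.Icc 1 m, D' l)
    (hSodd : ∀ i : ℕ, 1 ≤ i → i ≤ n → Odd i → S i = S' ((i - 1) / 2) + D i)
    (hSeven : ∀ i : ℕ, 1 ≤ i → i ≤ n → Even i → S i = S' (i / 2)) :
    ∀ i : ℕ, 1 ≤ i → i ≤ n → S i = ∑ j ∈ Finset.Icc 1 i, D j := by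
  have key : ∀ m : ℕ, m ≤ n / 2 → S' m = ∑ j ∈ Finset.Icc 1 (2 * m), D j := by
    intro m hm
    rw [hS' m hm]
    induction m with
    | zero => simp
    | succ k ih =>
      rw [Finset.sum_Icc_succ_top (by omega : 1 ≤ k + 1),
          ih (by omega),
          hD' (k + 1) (by omega) hm]
      have h1 : 2 * (k + 1) = (2 * k + 1) + 1 := by ring
      have h2 : 2 * (k + 1) - 1 = 2 * k + 1 := by omega
      rw [h1, Finset.sum_Icc_succ_top (by omega), Finset.sum_Icc_succ_top (by omega)]
      simp only [Nat.add_sub_cancel]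
      ring
  intro i hi hin
  rcases Nat.even_or_odd i with he | ho
  · rw [hSeven i hi hin he]
    have h2 : 2 * (i / 2) = i := by
      obtain ⟨k, hk⟩ := he; omega
    rw [key (i / 2) (Nat.div_le_div_right hin), h2]
  · rw [hSodd i hi hin ho]
    obtain ⟨k, hk⟩ := ho
    have hk2 : (i - 1) / 2 = k := by omega
    have hkn : k ≤ n / 2 := by obtain ⟨m, hm⟩ := hn; omega
    rw [hk2, key k hkn]
    have : i = 2 * k + 1 := by omega
    rw [this, Finset.sum_Icc_succ_top (by omega)]
end

section
/- Let α be a linear order, k ∈ ℕ, and x : Fin (2k) → α such that x (2j) ≠ x (2j+1) for every j < k (each adjacent pair consists of two distinct elements). Then there exists a function enc : (Fin k → Bool) → (Fin (2k) → α) such that: (1) for every bit string β : Fin k → Bool, enc β = x ∘ σ_β for some permutation σ_β of Fin (2k) that only transposes within the pairs {2j, 2j+1} (so enc β is a rearrangement of x preserving its multiset of values); (2) for every β and every j < k, the comparison bit of pair j recovers β: (enc β (2j) < enc β (2j+1)) ↔ β j = true; and consequently (3) enc is injective. In particular, an array of 2⌈log₂(n+1)⌉ pairwise comparable distinct-paired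 elements can encode and decode any value v ∈ {0, …, n} via the binary digits of v. -/
/-- The index `2 * j` of the first element of the `j`-th adjacent pair. -/
def pairLo {k : ℕ} (j : Fin k) : Fin (2 * k) :=
  ⟨2 * (j : ℕ), by have := j.isLt; omega⟩

/-- The index `2 * j + 1` of the second element of the `j`-th adjacent pair. -/
def pairHi {k : ℕ} (j : Fin k) : Fin (2 * k) :=
  ⟨2 * (j : ℕ) + 1, by have := j.isLt; omega⟩

theorem block_encoding_of_distinct_pairs {α : Type*} [LinearOrder α]
    (k : ℕ) (x : Fin (2 * k) → α)
    (hx : ∀ j : Fin k, x (pairLo j) ≠ x (pairHi j)) :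
    ∃ enc : (Fin k → Bool) → (Fin (2 * k) → α),
      (∀ β : Fin k → Bool, ∃ σ : Equiv.Perm (Fin (2 * k)),
        enc β = x ∘ σ ∧
        ∀ j : Fin k,
          (σ (pairLo j) = pairLo j ∧ σ (pairHi j) = pairHi j) ∨
          (σ (pairLo j) = pairHi j ∧ σ (pairHi j) = pairLo j)) ∧
      (∀ β : Fin k → Bool, ∀ j : Fin k,
        enc β (pairLo j) < enc β (pairHi j) ↔ β j = true) ∧
      Function.Injective enc := by
  classical
  -- base bit of pair j
  set b : Fin k → Bool := fun j => decide (x (pairLo j) < x (pairHi j)) with hb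
  -- pair index of i
  have hdiv : ∀ i : Fin (2 * k), i.val / 2 < k := by
    intro i; have := i.isLt; omega
  let pj : Fin (2 * k) → Fin k := fun i => ⟨i.val / 2, hdiv i⟩
  -- the swap map for a given bit string
  let f : (Fin k → Bool) → Fin (2 * k) → Fin (2 * k) := fun β i =>
    if β (pj i) = b (pj i) then i
    else ⟨2 * (i.val / 2) + (1 - i.val % 2), by have := i.isLt; omega⟩
  have hpjf : ∀ β i, pj (f β i) = pj i := by
    intro β i
    simp only [f]
    split
    · rfl
    · apply Fin.ext; simp only [pj]; omega
  have hinv : ∀ β, Function.Involutive (f β) := by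
    intro β i
    by_cases h : β (pj i) = b (pj i)
    · simp only [f, if_pos h]
    · have h1 : f β i = ⟨2 * (i.val / 2) + (1 - i.val % 2), by have := i.isLt; omega⟩ := by
        simp only [f, if_neg h]
      have h2 : pj (f β i) = pj i := hpjf β i
      rw [h1] at h2 ⊢
      simp only [f, h2, if_neg h]
      apply Fin.ext
      simp only
      omega
  -- pj of pairLo/pairHi
  have hpjLo : ∀ j : Fin k, pj (pairLo j) = j := by
    intro j; apply Fin.ext; simp [pj, pairLo]
  have hpjHi : ∀ j : Fin k, pj (pairHi j) = j := by
    intro j; apply Fin.ext; simp only [pj, pairHi]; omega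
  have hfLo : ∀ β j, f β (pairLo j) = if β j = b j then pairLo j else pairHi j := by
    intro β j
    simp only [f, hpjLo]
    split
    · rfl
    · apply Fin.ext; simp only [pairLo, pairHi]; omega
  have hfHi : ∀ β j, f β (pairHi j) = if β j = b j then pairHi j else pairLo j := by
    intro β j
    simp only [f, hpjHi]
    split
    · rfl
    · apply Fin.ext; simp only [pairLo, pairHi]; omega
  refine ⟨fun β => x ∘ (f β), ?_, ?_, ?_⟩
  · intro β
    refine ⟨(hinv β).toPerm, rfl, ?_⟩
    intro j
    by_cases h : β j = b j
    · left; constructor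
      · show f β (pairLo j) = pairLo j; rw [hfLo, if_pos h]
      · show f β (pairHi j) = pairHi j; rw [hfHi, if_pos h]
    · right; constructor
      · show f β (pairLo j) = pairHi j; rw [hfLo, if_neg h]
      · show f β (pairHi j) = pairLo j; rw [hfHi, if_neg h]
  · intro β j
    have key : ∀ β j, (x (f β (pairLo j)) < x (f β (pairHi j))) ↔ β j = true := by
      intro β j
      rw [hfLo, hfHi]
      by_cases h : β j = b j
      · rw [if_pos h, if_pos h, h, hb]
        simp
      · rw [if_neg h, if_neg h]
        have hne := hx j
        cases hβ : β j
        · simp only [hβ] at h ⊢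
          have : b j = true := by
            cases hbj : b j <;> simp [hβ, hbj] at h ⊢
          rw [hb] at this
          simp only [decide_eq_true_eq] at this
          simp only [Bool.false_eq_true, iff_false, not_lt]
          exact le_of_lt this
        · simp only [hβ, iff_true]
          have : b j = false := by
            cases hbj : b j <;> simp [hβ, hbj] at h ⊢
          rw [hb] at this
          simp only [decide_eq_false_iff_not, not_lt] at this
          exact lt_of_le_of_ne this (Ne.symm hne)
    exact key β j
  · intro β β' hββ'
    funext j
    have key : ∀ β j, (x (f β (pairLo j)) < x (f β (pairHi j))) ↔ β j = true := by
      intro β j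
      rw [hfLo, hfHi]
      by_cases h : β j = b j
      · rw [if_pos h, if_pos h, h, hb]
        simp
      · rw [if_neg h, if_neg h]
        have hne := hx j
        cases hβ : β j
        · simp only [hβ] at h ⊢
          have : b j = true := by
            cases hbj : b j <;> simp [hβ, hbj] at h ⊢
          rw [hb] at this
          simp only [decide_eq_true_eq] at this
          simp only [Bool.false_eq_true, iff_false, not_lt]
          exact le_of_lt this
        · simp only [hβ, iff_true]
          have : b j = false := by
            cases hbj : b j <;> simp [hβ, hbj] at h ⊢
          rw [hb] at this
          simp only [decide_eq_false_iff_not, not_lt] at this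
          exact lt_of_le_of_ne this (Ne.symm hne)
    have h1 := key β j
    have h2 := key β' j
    have e1 : x (f β (pairLo j)) = x (f β' (pairLo j)) := congrFun hββ' (pairLo j)
    have e2 : x (f β (pairHi j)) = x (f β' (pairHi j)) := congrFun hββ' (pairHi j)
    rw [e1, e2] at h1
    cases hβj : β j <;> cases hβ'j : β' j <;> simp [hβj, hβ'j] at h1 h2 <;>
      first | rfl | (exact absurd h2 (by simp [h1])) | (exact absurd h1 (by simp [h2]))
end

section
/- Let s and g be positive integers, let (Ω, P) be a probability space, and let X_1, …, X_s : Ω → ZMod g be independent random variables, each uniformly distributed on ZMod g. Let w : {1, …, s} → ZMod g → ℝ take values in [0,1], and set μ = (1/(s·g)) · ∑_{j=1}^s ∑_{k ∈ ZMod g} w j k. For each i ∈ ZMod g define the random variable μ_i = (1/s) · ∑_{j=1}^s w j (X_j + i). Then for every δ > 0, P( ∃ i ∈ ZMod g, |μ_i − μ| ≥ δ ) ≤ 2·g·exp(−2·s·δ²). -/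
/-!
The law of the offset vector `(X_1, …, X_s)` is the uniform measure on `(ZMod g)^s`: independence
and uniformity give every singleton its uniform mass, and subadditivity of `P` then bounds the
probability of any event `{X ∈ S}` by the uniform mass of `S`, with no measurability of the `X_j`
needed. Under the uniform product measure the coordinates are independent, so for a fixed group
`i` the numbers `w j (x_j + i)` are independent `[0,1]`-valued random variables whose means add up
to `s μ` (shifting by `i` permutes `ZMod g`). Two-sided Hoeffding bounds each group's deviation
probability by `2 exp (-2 s δ²)`, and a union bound over the `g` groups finishes the proof.
-/

open MeasureTheory ProbabilityTheory Real Finset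

lemma measureReal_abs_sum_sub_integral_ge_le {Ω ι : Type*} [MeasurableSpace Ω]
    {μ : Measure Ω} [IsProbabilityMeasure μ] {Y : ι → Ω → ℝ} (hY : iIndepFun Y μ)
    (hm : ∀ i, Measurable (Y i)) {a b : ℝ} (hab : ∀ i ω, Y i ω ∈ Set.Icc a b)
    (s : Finset ι) {ε : ℝ} (hε : 0 ≤ ε) :
    μ.real {ω | ε ≤ |∑ i ∈ s, (Y i ω - μ[Y i])|} ≤
      2 * exp (-2 * ε ^ 2 / (#s * (b - a) ^ 2)) := by
  set Z : ι → Ω → ℝ := fun i ω => Y i ω - μ[Y i]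
  have hZ : iIndepFun Z μ := hY.comp _ fun i => measurable_id.sub_const _
  have hZsub : ∀ i, HasSubgaussianMGF (Z i) ((‖b - a‖₊ / 2) ^ 2) μ := fun i =>
    hasSubgaussianMGF_of_mem_Icc (hm i).aemeasurable (ae_of_all _ (hab i))
  have htail : ∀ {V : ι → Ω → ℝ}, iIndepFun V μ →
      (∀ i, HasSubgaussianMGF (V i) ((‖b - a‖₊ / 2) ^ 2) μ) →
      μ.real {ω | ε ≤ ∑ i ∈ s, V i ω} ≤ exp (-2 * ε ^ 2 / (#s * (b - a) ^ 2)) := by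
    intro V hV hVsub
    refine (HasSubgaussianMGF.measure_sum_ge_le_of_iIndepFun hV (fun i _ => hVsub i) hε).trans_eq
      ?_
    simp only [Finset.sum_const, nsmul_eq_mul, NNReal.coe_mul, NNReal.coe_natCast,
      NNReal.coe_pow, NNReal.coe_div, coe_nnnorm, Real.norm_eq_abs, NNReal.coe_ofNat, div_pow,
      sq_abs]
    rw [show (2 : ℝ) * (#s * ((b - a) ^ 2 / 2 ^ 2)) = #s * (b - a) ^ 2 / 2 by ring,
      div_div_eq_mul_div]
    ring_nf
  have hupper := htail hZ hZsub
  have hlower := htail (V := fun i => -Z i) (hZ.comp (fun _ => Neg.neg) fun _ => measurable_neg)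
    fun i => (hZsub i).neg
  calc μ.real {ω | ε ≤ |∑ i ∈ s, Z i ω|}
      ≤ μ.real ({ω | ε ≤ ∑ i ∈ s, Z i ω} ∪ {ω | ε ≤ ∑ i ∈ s, (-Z i) ω}) := by
        refine measureReal_mono fun ω (hω : ε ≤ _) => ?_
        simpa only [Set.mem_union, Set.mem_ofPred_eq, Pi.neg_apply, Finset.sum_neg_distrib]
          using le_abs.1 hω
    _ ≤ _ := (measureReal_union_le _ _).trans (by linarith)

lemma integral_uniformOfFintype {α : Type*} [Fintype α] [Nonempty α] [MeasurableSpace α]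
    [MeasurableSingletonClass α] (f : α → ℝ) :
    ∫ a, f a ∂(PMF.uniformOfFintype α).toMeasure =
      (Fintype.card α : ℝ)⁻¹ * ∑ a, f a := by
  simp [PMF.integral_eq_sum, PMF.uniformOfFintype_apply, Finset.mul_sum]

lemma measureReal_pi_uniformOfFintype_abs_mean_sub_ge_le {ι α : Type*} [Fintype ι] [Fintype α]
    [Nonempty α] [MeasurableSpace α] [MeasurableSingletonClass α] (f : ι → α → ℝ)
    (hf : ∀ j k, f j k ∈ Set.Icc (0 : ℝ) 1) {δ : ℝ} (hδ : 0 ≤ δ) :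
    (Measure.pi fun _ : ι => (PMF.uniformOfFintype α).toMeasure).real
        {x | δ ≤ |1 / (Fintype.card ι : ℝ) * ∑ j, f j (x j) -
          1 / ((Fintype.card ι : ℝ) * Fintype.card α) * ∑ j, ∑ k, f j k|}
      ≤ 2 * exp (-2 * Fintype.card ι * δ ^ 2) := by
  set n : ℝ := (Fintype.card ι : ℝ)
  set ν := Measure.pi fun _ : ι => (PMF.uniformOfFintype α).toMeasure
  have hmean : ∀ j, ν[fun x => f j (x j)] = (Fintype.card α : ℝ)⁻¹ * ∑ k, f j k := by
    intro j
    rw [integral_comp_eval Measurable.of_discrete.aestronglyMeasurable,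
      integral_uniformOfFintype]
  have hsum : ∀ x : ι → α, ∑ j, (f j (x j) - ν[fun x => f j (x j)]) =
      n * (1 / n * ∑ j, f j (x j) - 1 / (n * Fintype.card α) * ∑ j, ∑ k, f j k) := by
    intro x
    simp only [hmean, Finset.sum_sub_distrib, ← Finset.mul_sum]
    rcases eq_or_ne n 0 with hn | hn
    · simp [n, Fintype.card_eq_zero_iff.1 (by exact_mod_cast hn)] at hn ⊢
    · field_simp
  calc _ ≤ ν.real {x | n * δ ≤ |∑ j, (f j (x j) - ν[fun x => f j (x j)])|} := by
        refine measureReal_mono fun x (hx : δ ≤ _) => ?_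
        show n * δ ≤ _
        rw [hsum, abs_mul, Nat.abs_cast]
        exact mul_le_mul_of_nonneg_left hx (Nat.cast_nonneg _)
    _ ≤ 2 * exp (-2 * (n * δ) ^ 2 / (n * (1 - 0) ^ 2)) :=
        measureReal_abs_sum_sub_integral_ge_le
          (iIndepFun_pi fun _ => Measurable.of_discrete.aemeasurable)
          (fun _ => Measurable.of_discrete.comp (measurable_pi_apply _)) (fun j x => hf j (x j))
          _ (by positivity)
    _ = _ := by
        congr 2
        rcases eq_or_ne n 0 with hn | hn
        · simp [hn]
        · field_simp
          ring

lemma measure_preimage_le_pi {Ω ι : Type*} [MeasurableSpace Ω] [Fintype ι] {α : ι → Type*}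
    [∀ i, Fintype (α i)] [∀ i, MeasurableSpace (α i)] [∀ i, MeasurableSingletonClass (α i)]
    {P : Measure Ω} {X : ∀ i, Ω → α i} (hX : iIndepFun X P) {ν : ∀ i, Measure (α i)}
    [∀ i, SigmaFinite (ν i)] (hlaw : ∀ i a, P {ω | X i ω = a} = ν i {a})
    (S : Set (∀ i, α i)) :
    P ((fun ω i => X i ω) ⁻¹' S) ≤ Measure.pi ν S := by
  classical
  calc P ((fun ω i => X i ω) ⁻¹' S)
      = P (⋃ x ∈ S.toFinset, ⋂ i ∈ (univ : Finset ι), X i ⁻¹' {x i}) := by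
        congr 1; ext ω
        simp [← funext_iff]
    _ ≤ ∑ x ∈ S.toFinset, P (⋂ i ∈ (univ : Finset ι), X i ⁻¹' {x i}) :=
        measure_biUnion_finset_le _ _
    _ = ∑ x ∈ S.toFinset, Measure.pi ν {x} := by
        refine Finset.sum_congr rfl fun x _ => ?_
        rw [hX.measure_inter_preimage_eq_mul _ fun i _ => measurableSet_singleton _,
          Measure.pi_singleton]
        exact Finset.prod_congr rfl fun i _ => hlaw i (x i)
    _ = Measure.pi ν S := by rw [sum_measure_singleton, Set.coe_toFinset]

theorem hoeffding_union_bound_groups_general (s g : ℕ) [NeZero g]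
    (Ω : Type*) [MeasurableSpace Ω] (P : Measure Ω)
    (X : Fin s → Ω → ZMod g)
    (hXindep : iIndepFun (m := fun _ : Fin s => (⊤ : MeasurableSpace (ZMod g))) X P)
    (hXunif : ∀ (j : Fin s) (k : ZMod g), P {ω | X j ω = k} = (g : ENNReal)⁻¹)
    (w : Fin s → ZMod g → ℝ) (hw : ∀ j k, w j k ∈ Set.Icc (0 : ℝ) 1)
    (μ : ℝ) (hμ : μ = (1 / ((s : ℝ) * g)) * ∑ j : Fin s, ∑ k : ZMod g, w j k)
    (δ : ℝ) (hδ : 0 < δ) :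
    P {ω | ∃ i : ZMod g,
        δ ≤ |(1 / (s : ℝ)) * (∑ j : Fin s, w j (X j ω + i)) - μ|}
      ≤ ENNReal.ofReal (2 * g * Real.exp (-2 * s * δ ^ 2)) := by
  set bad : ZMod g → Set (Fin s → ZMod g) :=
    fun i => {x | δ ≤ |(1 / (s : ℝ)) * (∑ j, w j (x j + i)) - μ|}
  have hlaw : ∀ j k, P {ω | X j ω = k} = (PMF.uniformOfFintype (ZMod g)).toMeasure {k} := by
    simp [hXunif, PMF.uniformOfFintype_apply]
  have hbad : ∀ i, (Measure.pi fun _ => (PMF.uniformOfFintype (ZMod g)).toMeasure).real (bad i)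
      ≤ 2 * exp (-2 * s * δ ^ 2) := fun i => by
    have hshift : ∀ j, ∑ k, w j (k + i) = ∑ k, w j k := fun j =>
      Equiv.sum_comp (Equiv.addRight i) (w j)
    simpa only [Fintype.card_fin, ZMod.card, hshift, ← hμ] using
      measureReal_pi_uniformOfFintype_abs_mean_sub_ge_le _ (fun j k => hw j (k + i)) hδ.le
  calc _ = P (⋃ i, (fun ω j => X j ω) ⁻¹' bad i) := by rw [Set.ofPred_exists]; rfl
    _ ≤ ∑ i, P ((fun ω j => X j ω) ⁻¹' bad i) := measure_iUnion_fintype_le _ _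
    _ ≤ ∑ _i : ZMod g, ENNReal.ofReal (2 * exp (-2 * s * δ ^ 2)) := by
        refine Finset.sum_le_sum fun i _ => (measure_preimage_le_pi hXindep hlaw _).trans ?_
        rw [← ofReal_measureReal]
        exact ENNReal.ofReal_le_ofReal (hbad i)
    _ = _ := by
        rw [Finset.sum_const, Finset.card_univ, ZMod.card, nsmul_eq_mul, ← ENNReal.ofReal_natCast,
          ← ENNReal.ofReal_mul (Nat.cast_nonneg _)]
        ring_nf

theorem hoeffding_union_bound_groups (s g : ℕ) (hs : 0 < s) [NeZero g]
    (Ω : Type*) [MeasurableSpace Ω] (P : Measure Ω) [IsProbabilityMeasure P]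
    (X : Fin s → Ω → ZMod g)
    (hXindep : iIndepFun (m := fun _ : Fin s => (⊤ : MeasurableSpace (ZMod g))) X P)
    (hXunif : ∀ (j : Fin s) (k : ZMod g), P {ω | X j ω = k} = (g : ENNReal)⁻¹)
    (w : Fin s → ZMod g → ℝ) (hw : ∀ j k, w j k ∈ Set.Icc (0 : ℝ) 1)
    (μ : ℝ) (hμ : μ = (1 / ((s : ℝ) * g)) * ∑ j : Fin s, ∑ k : ZMod g, w j k)
    (δ : ℝ) (hδ : 0 < δ) :
    P {ω | ∃ i : ZMod g,
        δ ≤ |(1 / (s : ℝ)) * (∑ j : Fin s, w j (X j ω + i)) - μ|}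
      ≤ ENNReal.ofReal (2 * g * Real.exp (-2 * s * δ ^ 2)) :=
  hoeffding_union_bound_groups_general s g Ω P X hXindep hXunif w hw μ hμ δ hδ
end

section
/- Let s, g, b be positive integers, n = s·g·b with n ≥ 3, and let δ, ε be real numbers with 0 < δ < 1/2, 0 < ε < 1/2, and s > ln(n/ε)/δ². Let (Ω, P) be a probability space and X_1, …, X_s : Ω → ZMod g independent random variables, each uniformly distributed on ZMod g. Let w : {1, …, s} → ZMod g → ℝ take values in [0,1], set μ = (1/(s·g)) · ∑_{j=1}^s ∑_{k ∈ ZMod g} w j k, and for i ∈ ZMod g define μ_i = (1/s) · ∑_{j=1}^s w j (X_j + i). Then with probability at least 1 − ε the following holds: for every choice of real numbers v_i (i ∈ ZMod g) satisfying s·μ_i·g·b − g·b + 1 ≤ v_i ≤ s·μ_i·g·b + g·b, one has max_i v_i − min_i v_i < 4·n·δ. -/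
/-!
Call an offset vector `κ : Fin s → ZMod g` unbalanced if some group fraction
`μ_i = (1/s) ∑ j, w j (κ j + i)` is at least `δ` away from `μ`. Independence and uniformity
give every cylinder `{ω | ∀ j, X j ω = κ j}` probability `g ^ (-s)`, so the probability that
`(X j ω)_j` is unbalanced is at most the uniform measure of the unbalanced vectors; this detour
through the product space is needed because the `X j` are not assumed measurable. Under the
uniform product measure, `s μ_i` is a sum of `s` independent `[0, 1]`-valued variables with mean
`s μ` (translating by `i` permutes `ZMod g`), so Hoeffding's inequality and a union bound over the
`g` groups bound that measure by `2 g exp (-2 s δ²) ≤ 2 g (ε / n)² ≤ ε`. For balanced offsets the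
`μ_i` lie within `2δ` of each other, hence the `v_i` within `2 n δ + 2 g b ≤ 4 n δ`, where
`s δ ≥ 1` follows from `s δ² > log (n / ε) > 1`.
-/

open MeasureTheory ProbabilityTheory Finset Real

section UniformPi

variable (ι α : Type*) [Fintype ι] [Fintype α] [MeasurableSpace α]
  [MeasurableSingletonClass α]

noncomputable def uniformPi : Measure (ι → α) :=
  Measure.pi fun _ : ι => uniformOn (Set.univ : Set α)

instance [Nonempty α] : IsProbabilityMeasure (uniformPi ι α) := by
  unfold uniformPi; infer_instance

variable {ι α}

lemma uniformPi_singleton (κ : ι → α) :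
    uniformPi ι α {κ} = (Fintype.card α : ENNReal)⁻¹ ^ Fintype.card ι := by
  simp [uniformPi, uniformOn_univ, prod_const]

lemma measure_cylinder_eq_uniformPi {Ω : Type*} [MeasurableSpace Ω] {P : Measure Ω}
    {X : ι → Ω → α} (hindep : iIndepFun X P)
    (hunif : ∀ j a, P {ω | X j ω = a} = (Fintype.card α : ENNReal)⁻¹) (κ : ι → α) :
    P (⋂ j, X j ⁻¹' {κ j}) = uniformPi ι α {κ} := by
  have h := hindep.measure_inter_preimage_eq_mul (S := univ) (sets := fun j => {κ j})
    fun j _ => measurableSet_singleton (κ j)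
  simp only [mem_univ, Set.iInter_true] at h
  rw [h, uniformPi_singleton, ← card_univ (α := ι), ← prod_const]
  exact prod_congr rfl fun j _ => hunif j (κ j)

lemma measure_mem_le_uniformPi {Ω : Type*} [MeasurableSpace Ω] {P : Measure Ω}
    {X : ι → Ω → α} (hindep : iIndepFun X P)
    (hunif : ∀ j a, P {ω | X j ω = a} = (Fintype.card α : ENNReal)⁻¹) (B : Set (ι → α)) :
    P {ω | (fun j => X j ω) ∈ B} ≤ uniformPi ι α B := by
  classical
  calc P {ω | (fun j => X j ω) ∈ B}
      ≤ P (⋃ κ ∈ B.toFinset, ⋂ j, X j ⁻¹' {κ j}) := by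
        refine measure_mono fun ω hω => Set.mem_biUnion (x := fun j => X j ω) ?_ ?_ <;> simp_all
    _ ≤ ∑ κ ∈ B.toFinset, P (⋂ j, X j ⁻¹' {κ j}) := measure_biUnion_finset_le _ _
    _ = uniformPi ι α B := by
        simp only [measure_cylinder_eq_uniformPi hindep hunif, sum_measure_singleton,
          Set.coe_toFinset]

lemma integral_uniformPi_comp_eval [Nonempty α] (f : α → ℝ) (j : ι) :
    ∫ κ, f (κ j) ∂uniformPi ι α = (Fintype.card α : ℝ)⁻¹ * ∑ a, f a := by
  rw [uniformPi, integral_comp_eval (by fun_prop), integral_fintype (.of_finite)]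
  simp [uniformOn_univ, Measure.real, mul_sum]

lemma uniformPi_real_sum_sub_average_ge_le [Nonempty α] {a b : ℝ} (f : ι → α → ℝ)
    (hf : ∀ j x, f j x ∈ Set.Icc a b) {t : ℝ} (ht : 0 ≤ t) :
    (uniformPi ι α).real
        {κ | t ≤ ∑ j, (f j (κ j) - (Fintype.card α : ℝ)⁻¹ * ∑ x, f j x)} ≤
      exp (-2 * t ^ 2 / (Fintype.card ι * (b - a) ^ 2)) := by
  have hindep : iIndepFun (fun j κ => f j (κ j) - (Fintype.card α : ℝ)⁻¹ * ∑ x, f j x)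
      (uniformPi ι α) :=
    iIndepFun_pi (X := fun j x => f j x - (Fintype.card α : ℝ)⁻¹ * ∑ y, f j y)
      fun _ => by fun_prop
  have hsubG : ∀ j ∈ (univ : Finset ι),
      HasSubgaussianMGF (fun κ => f j (κ j) - (Fintype.card α : ℝ)⁻¹ * ∑ x, f j x)
        ((‖b - a‖₊ / 2) ^ 2) (uniformPi ι α) := fun j _ => by
    rw [← integral_uniformPi_comp_eval (ι := ι) (f j) j]
    exact hasSubgaussianMGF_of_mem_Icc (X := fun κ : ι → α => f j (κ j))
      ((measurable_of_finite (f j)).comp (measurable_pi_apply j)).aemeasurable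
      (ae_of_all _ fun κ => hf j (κ j))
  refine (HasSubgaussianMGF.measure_sum_ge_le_of_iIndepFun hindep hsubG ht).trans_eq ?_
  congr 1
  simp only [div_pow, sum_const, card_univ, nsmul_eq_mul, NNReal.coe_mul, NNReal.coe_natCast,
    NNReal.coe_div, NNReal.coe_pow, coe_nnnorm, norm_eq_abs, sq_abs, NNReal.coe_ofNat, neg_mul]
  field_simp

lemma uniformPi_real_abs_sum_sub_average_ge_le [Nonempty α] {a b : ℝ} (f : ι → α → ℝ)
    (hf : ∀ j x, f j x ∈ Set.Icc a b) {t : ℝ} (ht : 0 ≤ t) :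
    (uniformPi ι α).real
        {κ | t ≤ |∑ j, (f j (κ j) - (Fintype.card α : ℝ)⁻¹ * ∑ x, f j x)|} ≤
      2 * exp (-2 * t ^ 2 / (Fintype.card ι * (b - a) ^ 2)) := by
  have hneg : ∀ j x, -f j x ∈ Set.Icc (-b) (-a) := fun j x => by
    simpa [and_comm] using hf j x
  have upper := uniformPi_real_sum_sub_average_ge_le f hf ht
  have lower := uniformPi_real_sum_sub_average_ge_le (fun j x => -f j x) hneg ht
  rw [show -a - -b = b - a by ring] at lower
  calc (uniformPi ι α).real {κ | t ≤ |∑ j, (f j (κ j) - (Fintype.card α : ℝ)⁻¹ * ∑ x, f j x)|}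
      ≤ (uniformPi ι α).real
          ({κ | t ≤ ∑ j, (f j (κ j) - (Fintype.card α : ℝ)⁻¹ * ∑ x, f j x)} ∪
            {κ | t ≤ ∑ j, (-f j (κ j) - (Fintype.card α : ℝ)⁻¹ * ∑ x, -f j x)}) := by
        refine measureReal_mono fun κ (hκ : t ≤ |_|) => ?_
        rcases le_abs.1 hκ with h | h
        · exact Or.inl h
        · refine Or.inr (h.trans_eq ?_)
          rw [← sum_neg_distrib]
          refine sum_congr rfl fun j _ => ?_
          rw [sum_neg_distrib]
          ring
    _ ≤ _ := (measureReal_union_le _ _).trans (by linarith)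

lemma uniformPi_real_exists_abs_sum_sub_average_ge_le [Nonempty α] {β : Type*} [Fintype β]
    {a b : ℝ} (f : β → ι → α → ℝ) (hf : ∀ i j x, f i j x ∈ Set.Icc a b) {t : ℝ} (ht : 0 ≤ t) :
    (uniformPi ι α).real
        {κ | ∃ i, t ≤ |∑ j, (f i j (κ j) - (Fintype.card α : ℝ)⁻¹ * ∑ x, f i j x)|} ≤
      Fintype.card β * (2 * exp (-2 * t ^ 2 / (Fintype.card ι * (b - a) ^ 2))) := by
  calc (uniformPi ι α).real
        {κ | ∃ i, t ≤ |∑ j, (f i j (κ j) - (Fintype.card α : ℝ)⁻¹ * ∑ x, f i j x)|}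
      ≤ ∑ i, (uniformPi ι α).real
          {κ | t ≤ |∑ j, (f i j (κ j) - (Fintype.card α : ℝ)⁻¹ * ∑ x, f i j x)|} := by
        refine (measureReal_mono ?_ (measure_ne_top _ _)).trans
          (measureReal_biUnion_finset_le univ _)
        intro κ ⟨i, hi⟩
        exact Set.mem_biUnion (mem_univ i) hi
    _ ≤ _ := by
        refine (sum_le_sum fun i _ => ?_).trans_eq (by rw [sum_const, card_univ, nsmul_eq_mul])
        exact uniformPi_real_abs_sum_sub_average_ge_le (f i) (hf i) ht

end UniformPi

lemma ofReal_one_sub_le_measure_of_compl_le {Ω : Type*} [MeasurableSpace Ω] {P : Measure Ω}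
    [IsProbabilityMeasure P] {S : Set Ω} {ε : ℝ} (hε : 0 ≤ ε)
    (h : P Sᶜ ≤ ENNReal.ofReal ε) : ENNReal.ofReal (1 - ε) ≤ P S := by
  rw [ENNReal.ofReal_sub _ hε, ENNReal.ofReal_one, tsub_le_iff_right]
  calc 1 = P (S ∪ Sᶜ) := by rw [Set.union_compl_self, measure_univ]
    _ ≤ P S + P Sᶜ := measure_union_le _ _
    _ ≤ P S + ENNReal.ofReal ε := add_le_add le_rfl h

lemma one_lt_log_div {n ε : ℝ} (hn : 3 ≤ n) (hε0 : 0 < ε) (hε1 : ε < 1 / 2) :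
    1 < log (n / ε) := by
  rw [lt_log_iff_exp_lt (by positivity)]
  calc exp 1 < 6 := by linarith [exp_one_lt_d9]
    _ < n / ε := by rw [lt_div_iff₀ hε0]; linarith

lemma two_mul_exp_neg_two_mul_le {g n ε L : ℝ} (hε : 0 < ε) (hn : 0 < n) (hg : 0 ≤ g)
    (hgn : 2 * g * ε ≤ n ^ 2) (hL : log (n / ε) ≤ L) : 2 * g * exp (-2 * L) ≤ ε := by
  have hexp : exp (-2 * L) ≤ (ε / n) ^ 2 := by
    rw [← le_log_iff_exp_le (by positivity), log_pow, ← inv_div, log_inv]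
    push_cast
    linarith
  calc 2 * g * exp (-2 * L) ≤ 2 * g * (ε / n) ^ 2 := by gcongr
    _ = 2 * g * ε / n ^ 2 * ε := by ring
    _ ≤ 1 * ε := by gcongr; rwa [div_le_one (by positivity)]
    _ = ε := one_mul ε

lemma Finset.sup'_sub_inf'_lt {ι : Type*} {t : Finset ι} (ht : t.Nonempty) {v : ι → ℝ} {c : ℝ}
    (hv : ∀ i ∈ t, ∀ i' ∈ t, v i - v i' < c) : t.sup' ht v - t.inf' ht v < c := by
  obtain ⟨i, hi, hsup⟩ := t.exists_mem_eq_sup' ht v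
  obtain ⟨i', hi', hinf⟩ := t.exists_mem_eq_inf' ht v
  rw [hsup, hinf]
  exact hv i hi i' hi'

lemma sup'_sub_inf'_lt_of_abs_sub_lt {ι : Type*} [Fintype ι] (hne : (univ : Finset ι).Nonempty)
    {s g b : ℕ} {m v : ι → ℝ} {μ δ : ℝ} (hm : ∀ i, |m i - μ| < δ) (hsδ : 1 ≤ s * δ)
    (hv : ∀ i, (s : ℝ) * m i * g * b - g * b + 1 ≤ v i ∧ v i ≤ (s : ℝ) * m i * g * b + g * b) :
    univ.sup' hne v - univ.inf' hne v < 4 * ((s * g * b : ℕ) : ℝ) * δ := by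
  refine Finset.sup'_sub_inf'_lt hne fun i _ i' _ => ?_
  have hgb : (0 : ℝ) ≤ g * b := by positivity
  have hspread : m i - m i' ≤ 2 * δ := by linarith [abs_lt.1 (hm i), abs_lt.1 (hm i')]
  have hscaled := mul_le_mul_of_nonneg_right hspread (mul_nonneg (Nat.cast_nonneg s) hgb)
  have hslack := mul_le_mul_of_nonneg_right hsδ hgb
  push_cast
  nlinarith [(hv i).2, (hv i').1]

section Offsets

variable {s g : ℕ} [NeZero g]

def unbalancedOffsets (w : Fin s → ZMod g → ℝ) (δ : ℝ) : Set (Fin s → ZMod g) :=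
  {κ | ∃ i, δ ≤ |(1 / s) * ∑ j, w j (κ j + i) - (1 / ((s : ℝ) * g)) * ∑ j, ∑ k, w j k|}

lemma sum_shift_sub_average_eq (w : Fin s → ZMod g → ℝ) (hs : 0 < s) (κ : Fin s → ZMod g)
    (i : ZMod g) :
    ∑ j, (w j (κ j + i) - (g : ℝ)⁻¹ * ∑ x, w j (x + i)) =
      s * ((1 / s) * ∑ j, w j (κ j + i) - (1 / ((s : ℝ) * g)) * ∑ j, ∑ k, w j k) := by
  have hshift : ∀ j, ∑ x, w j (x + i) = ∑ k, w j k := fun j =>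
    Equiv.sum_comp (Equiv.addRight i) (w j)
  simp only [hshift, sum_sub_distrib, ← mul_sum]
  field_simp

lemma uniformPi_real_unbalancedOffsets_le (w : Fin s → ZMod g → ℝ)
    (hw : ∀ j k, w j k ∈ Set.Icc (0 : ℝ) 1) (hs : 0 < s) {δ : ℝ} (hδ : 0 ≤ δ) :
    (uniformPi (Fin s) (ZMod g)).real (unbalancedOffsets w δ) ≤
      2 * g * exp (-2 * (s * δ ^ 2)) := by
  have hsR : (0 : ℝ) < s := by exact_mod_cast hs
  have key := uniformPi_real_exists_abs_sum_sub_average_ge_le (fun i j x => w j (x + i))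
    (fun i j x => hw j (x + i)) (mul_nonneg hsR.le hδ)
  simp only [ZMod.card, Fintype.card_fin] at key
  simp only [sum_shift_sub_average_eq w hs, abs_mul, Nat.abs_cast,
    mul_le_mul_iff_right₀ hsR] at key
  have hexponent : -2 * (s * δ) ^ 2 / (s * (1 - 0) ^ 2) = -2 * (s * δ ^ 2) := by
    field_simp
    ring
  rw [hexponent] at key
  exact key.trans_eq (by ring)

end Offsets

theorem partial_partition_vmax_sub_vmin_small_general (s g b n : ℕ)
    [NeZero g] (hn : n = s * g * b) (hn3 : 3 ≤ n)
    (δ ε : ℝ) (hδ0 : 0 < δ) (hδ1 : δ < 1 / 2) (hε0 : 0 < ε) (hε1 : ε < 1 / 2)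
    (hsbig : Real.log ((n : ℝ) / ε) / δ ^ 2 < (s : ℝ))
    (Ω : Type*) [MeasurableSpace Ω] (P : Measure Ω) [IsProbabilityMeasure P]
    (X : Fin s → Ω → ZMod g)
    (hXindep : iIndepFun (m := fun _ : Fin s => (⊤ : MeasurableSpace (ZMod g))) X P)
    (hXunif : ∀ (j : Fin s) (k : ZMod g), P {ω | X j ω = k} = (g : ENNReal)⁻¹)
    (w : Fin s → ZMod g → ℝ) (hw : ∀ j k, w j k ∈ Set.Icc (0 : ℝ) 1) :
    ENNReal.ofReal (1 - ε) ≤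
      P {ω | ∀ v : ZMod g → ℝ,
        (∀ i : ZMod g,
            (s : ℝ) * ((1 / (s : ℝ)) * ∑ j : Fin s, w j (X j ω + i)) * g * b - g * b + 1
                ≤ v i ∧
              v i ≤ (s : ℝ) * ((1 / (s : ℝ)) * ∑ j : Fin s, w j (X j ω + i)) * g * b + g * b) →
          Finset.univ.sup'
              (⟨(0 : ZMod g), Finset.mem_univ _⟩ : (Finset.univ : Finset (ZMod g)).Nonempty) v -
            Finset.univ.inf'
              (⟨(0 : ZMod g), Finset.mem_univ _⟩ : (Finset.univ : Finset (ZMod g)).Nonempty) v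
              < 4 * n * δ} := by
  subst hn
  have hs : 0 < s := Nat.pos_of_ne_zero (by rintro rfl; simp at hn3)
  have hn3R : (3 : ℝ) ≤ (s * g * b : ℕ) := by exact_mod_cast hn3
  have hgn : (g : ℝ) ≤ (s * g * b : ℕ) := by
    exact_mod_cast Nat.le_of_dvd (by omega) ⟨s * b, by ring⟩
  have hlog : log ((s * g * b : ℕ) / ε) < s * δ ^ 2 := (div_lt_iff₀ (by positivity)).1 hsbig
  have hsδ : 1 ≤ s * δ := by nlinarith [one_lt_log_div hn3R hε0 hε1]
  have hfailure : 2 * g * exp (-2 * (s * δ ^ 2)) ≤ ε :=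
    two_mul_exp_neg_two_mul_le hε0 (by positivity) (Nat.cast_nonneg g) (by nlinarith) hlog.le
  refine ofReal_one_sub_le_measure_of_compl_le hε0.le ?_
  calc _ ≤ P {ω | (fun j => X j ω) ∈ unbalancedOffsets w δ} := by
        refine measure_mono fun ω hω => ?_
        by_contra hbalanced
        exact hω fun v hv => sup'_sub_inf'_lt_of_abs_sub_lt _
          (fun i => not_le.1 fun h => hbalanced ⟨i, h⟩) hsδ hv
    _ ≤ uniformPi (Fin s) (ZMod g) (unbalancedOffsets w δ) :=
        measure_mem_le_uniformPi hXindep (by simpa only [ZMod.card] using hXunif) _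
    _ ≤ ENNReal.ofReal ε := by
        rw [← ofReal_measureReal]
        exact ENNReal.ofReal_le_ofReal
          ((uniformPi_real_unbalancedOffsets_le w hw hs hδ0.le).trans hfailure)

theorem partial_partition_vmax_sub_vmin_small (s g b n : ℕ)
    (hs : 0 < s) [NeZero g] (hb : 0 < b) (hn : n = s * g * b) (hn3 : 3 ≤ n)
    (δ ε : ℝ) (hδ0 : 0 < δ) (hδ1 : δ < 1 / 2) (hε0 : 0 < ε) (hε1 : ε < 1 / 2)
    (hsbig : Real.log ((n : ℝ) / ε) / δ ^ 2 < (s : ℝ))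
    (Ω : Type*) [MeasurableSpace Ω] (P : Measure Ω) [IsProbabilityMeasure P]
    (X : Fin s → Ω → ZMod g)
    (hXindep : iIndepFun (m := fun _ : Fin s => (⊤ : MeasurableSpace (ZMod g))) X P)
    (hXunif : ∀ (j : Fin s) (k : ZMod g), P {ω | X j ω = k} = (g : ENNReal)⁻¹)
    (w : Fin s → ZMod g → ℝ) (hw : ∀ j k, w j k ∈ Set.Icc (0 : ℝ) 1)
    (μ : ℝ) (hμ : μ = (1 / ((s : ℝ) * g)) * ∑ j : Fin s, ∑ k : ZMod g, w j k) :
    ENNReal.ofReal (1 - ε) ≤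
      P {ω | ∀ v : ZMod g → ℝ,
        (∀ i : ZMod g,
            (s : ℝ) * ((1 / (s : ℝ)) * ∑ j : Fin s, w j (X j ω + i)) * g * b - g * b + 1
                ≤ v i ∧
              v i ≤ (s : ℝ) * ((1 / (s : ℝ)) * ∑ j : Fin s, w j (X j ω + i)) * g * b + g * b) →
          Finset.univ.sup'
              (⟨(0 : ZMod g), Finset.mem_univ _⟩ : (Finset.univ : Finset (ZMod g)).Nonempty) v -
            Finset.univ.inf'
              (⟨(0 : ZMod g), Finset.mem_univ _⟩ : (Finset.univ : Finset (ZMod g)).Nonempty) v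
              < 4 * n * δ} :=
  partial_partition_vmax_sub_vmin_small_general s g b n hn hn3 δ ε hδ0 hδ1 hε0 hε1 hsbig Ω P X
    hXindep hXunif w hw
end
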